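/- The 9×9 matrix of solution 3.1.1, given in block form [1], [[0, a²/c],[c, 1−a²]], [[0,0,a⁴/c²],[0,a,x₃],[c²,x₄,(a+1)(a−1)²]], [[0, a²/c],[c, 1−a²]], [1] with x₃ = a(a²−1)²/x₄, has eigenvalues 1, −a², a³ with multiplicities 5, 3, 1 respectively (assuming a ∉ {0,1,−1}, c ≠ 0, x₄ ≠ 0). -/

import Mathlib

/-!
Ordering the basis by charge `i + j` makes `blockR` block diagonal, so its characteristic
polynomial is the product of those of the blocks. The two `2 × 2` blocks contribute
`(X - 1)(X + a²)` each (trace `1 - a²`, determinant `-a²`), the corner blocks `X - 1` each, and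
the `3 × 3` block `(X - 1)(X + a²)(X - a³)`: with `x₃ x₄ = a(a² - 1)²` its trace, sum of principal
`2 × 2` minors and determinant are the elementary symmetric functions of `1, -a², a³`.
-/

open Matrix Polynomial

noncomputable section

/-- `R̂ ⊗ 1` acting on `V ⊗ V ⊗ V` with `V = ℂ^3`. -/
def R1 (R : Matrix (Fin 3 × Fin 3) (Fin 3 × Fin 3) ℂ) :
    Matrix (Fin 3 × Fin 3 × Fin 3) (Fin 3 × Fin 3 × Fin 3) ℂ :=
  fun p q => R (p.1, p.2.1) (q.1, q.2.1) * (if p.2.2 = q.2.2 then 1 else 0)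

/-- `1 ⊗ R̂` acting on `V ⊗ V ⊗ V` with `V = ℂ^3`. -/
def R2 (R : Matrix (Fin 3 × Fin 3) (Fin 3 × Fin 3) ℂ) :
    Matrix (Fin 3 × Fin 3 × Fin 3) (Fin 3 × Fin 3 × Fin 3) ℂ :=
  fun p q => (if p.1 = q.1 then 1 else 0) * R (p.2.1, p.2.2) (q.2.1, q.2.2)

/-- The braid relation `R̂₁R̂₂R̂₁ = R̂₂R̂₁R̂₂`. -/
def Braid (R : Matrix (Fin 3 × Fin 3) (Fin 3 × Fin 3) ℂ) : Prop :=
  R1 R * R2 R * R1 R = R2 R * R1 R * R2 R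

/-- position within the charge-1 sector: |10⟩, |01⟩. -/
def f1 (p : Fin 3 × Fin 3) : Fin 2 := if p = (1, 0) then 0 else 1

/-- position within the charge-2 sector: |20⟩, |11⟩, |02⟩. -/
def f2 (p : Fin 3 × Fin 3) : Fin 3 := if p = (2, 0) then 0 else if p = (1, 1) then 1 else 2

/-- position within the charge-3 sector: |21⟩, |12⟩. -/
def f3 (p : Fin 3 × Fin 3) : Fin 2 := if p = (2, 1) then 0 else 1

/-- The 9×9 matrix with blocks of sizes 1,2,3,2,1 on the graded basis
|00⟩,|10⟩,|01⟩,|20⟩,|11⟩,|02⟩,|21⟩,|12⟩,|22⟩. -/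
def blockR (b0 : ℂ) (B1 : Matrix (Fin 2) (Fin 2) ℂ) (B2 : Matrix (Fin 3) (Fin 3) ℂ)
    (B3 : Matrix (Fin 2) (Fin 2) ℂ) (b4 : ℂ) : Matrix (Fin 3 × Fin 3) (Fin 3 × Fin 3) ℂ :=
  fun p q =>
    if (p.1 : ℕ) + (p.2 : ℕ) ≠ (q.1 : ℕ) + (q.2 : ℕ) then 0
    else if (p.1 : ℕ) + (p.2 : ℕ) = 0 then b0
    else if (p.1 : ℕ) + (p.2 : ℕ) = 1 then B1 (f1 p) (f1 q)
    else if (p.1 : ℕ) + (p.2 : ℕ) = 2 then B2 (f2 p) (f2 q)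
    else if (p.1 : ℕ) + (p.2 : ℕ) = 3 then B3 (f3 p) (f3 q)
    else b4

namespace Matrix

variable {R : Type*} [CommRing R]

theorem charpoly_of_fin_one (b : R) : (!![b]).charpoly = X - C b := by
  simp [charpoly]

theorem charpoly_fin_three (M : Matrix (Fin 3) (Fin 3) R) :
    M.charpoly = X ^ 3 - C M.trace * X ^ 2
      + C (M 0 0 * M 1 1 - M 0 1 * M 1 0 + M 0 0 * M 2 2 - M 0 2 * M 2 0
        + M 1 1 * M 2 2 - M 1 2 * M 2 1) * X - C M.det := by
  simp only [charpoly, det_fin_three, charmatrix_apply, trace_fin_three]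
  simp
  ring

theorem charpoly_fin_three_eq_prod (M : Matrix (Fin 3) (Fin 3) R) (r₁ r₂ r₃ : R)
    (htrace : M.trace = r₁ + r₂ + r₃)
    (hminors : M 0 0 * M 1 1 - M 0 1 * M 1 0 + M 0 0 * M 2 2 - M 0 2 * M 2 0
      + M 1 1 * M 2 2 - M 1 2 * M 2 1 = r₁ * r₂ + r₁ * r₃ + r₂ * r₃)
    (hdet : M.det = r₁ * r₂ * r₃) :
    M.charpoly = (X - C r₁) * (X - C r₂) * (X - C r₃) := by
  rw [charpoly_fin_three, htrace, hminors, hdet]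
  simp only [C_add, C_mul]
  ring

end Matrix

def chargeEquiv : Fin 3 × Fin 3 ≃ Fin 1 ⊕ Fin 2 ⊕ Fin 3 ⊕ Fin 2 ⊕ Fin 1 where
  toFun
    | (0, 0) => .inl 0
    | (1, 0) => .inr (.inl 0)
    | (0, 1) => .inr (.inl 1)
    | (2, 0) => .inr (.inr (.inl 0))
    | (1, 1) => .inr (.inr (.inl 1))
    | (0, 2) => .inr (.inr (.inl 2))
    | (2, 1) => .inr (.inr (.inr (.inl 0)))
    | (1, 2) => .inr (.inr (.inr (.inl 1)))
    | (2, 2) => .inr (.inr (.inr (.inr 0)))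
  invFun
    | .inl _ => (0, 0)
    | .inr (.inl 0) => (1, 0)
    | .inr (.inl 1) => (0, 1)
    | .inr (.inr (.inl 0)) => (2, 0)
    | .inr (.inr (.inl 1)) => (1, 1)
    | .inr (.inr (.inl 2)) => (0, 2)
    | .inr (.inr (.inr (.inl 0))) => (2, 1)
    | .inr (.inr (.inr (.inl 1))) => (1, 2)
    | .inr (.inr (.inr (.inr _))) => (2, 2)
  left_inv := by decide
  right_inv := by decide

theorem reindex_chargeEquiv_blockR (b0 : ℂ) (B1 : Matrix (Fin 2) (Fin 2) ℂ)
    (B2 : Matrix (Fin 3) (Fin 3) ℂ) (B3 : Matrix (Fin 2) (Fin 2) ℂ) (b4 : ℂ) :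
    reindex chargeEquiv chargeEquiv (blockR b0 B1 B2 B3 b4) =
      fromBlocks !![b0] 0 0 (fromBlocks B1 0 0 (fromBlocks B2 0 0 (fromBlocks B3 0 0 !![b4]))) := by
  ext i j
  fin_cases i <;> fin_cases j <;>
    simp [chargeEquiv, blockR, f1, f2, f3, fromBlocks, Prod.ext_iff]

theorem charpoly_blockR (b0 : ℂ) (B1 : Matrix (Fin 2) (Fin 2) ℂ)
    (B2 : Matrix (Fin 3) (Fin 3) ℂ) (B3 : Matrix (Fin 2) (Fin 2) ℂ) (b4 : ℂ) :
    (blockR b0 B1 B2 B3 b4).charpoly =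
      (X - C b0) * B1.charpoly * B2.charpoly * B3.charpoly * (X - C b4) := by
  rw [← charpoly_reindex chargeEquiv, reindex_chargeEquiv_blockR]
  simp only [charpoly_fromBlocks_zero₂₁, charpoly_of_fin_one]
  ring

theorem charpoly_sol311_block2 (a c : ℂ) (hc : c ≠ 0) :
    (!![0, a ^ 2 / c; c, 1 - a ^ 2]).charpoly = (X - C 1) * (X + C (a ^ 2)) := by
  have hdet : (!![0, a ^ 2 / c; c, 1 - a ^ 2]).det = -a ^ 2 := by
    rw [det_fin_two_of]
    field_simp
    ring
  rw [charpoly_fin_two, hdet, trace_fin_two_of]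
  simp only [zero_add, C_sub, C_neg, C_1, C_pow]
  ring

theorem charpoly_sol311_block3 (a c x4 : ℂ) (hc : c ≠ 0) (hx4 : x4 ≠ 0) :
    (!![0, 0, a ^ 4 / c ^ 2; 0, a, a * (a ^ 2 - 1) ^ 2 / x4;
        c ^ 2, x4, (a + 1) * (a - 1) ^ 2]).charpoly
      = (X - C 1) * (X + C (a ^ 2)) * (X - C (a ^ 3)) := by
  rw [charpoly_fin_three_eq_prod _ 1 (-a ^ 2) (a ^ 3), C_neg, sub_neg_eq_add]
  · simp [trace_fin_three]
    ring
  · simp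
    field_simp
    ring
  · simp [det_fin_three]
    field_simp

theorem sol311_charpoly_general (a c x4 : ℂ)
    (hc : c ≠ 0) (hx4 : x4 ≠ 0) :
    (blockR 1 !![0, a ^ 2 / c; c, 1 - a ^ 2]
      !![0, 0, a ^ 4 / c ^ 2; 0, a, a * (a ^ 2 - 1) ^ 2 / x4; c ^ 2, x4, (a + 1) * (a - 1) ^ 2]
      !![0, a ^ 2 / c; c, 1 - a ^ 2] 1).charpoly
      = (X - C 1) ^ 5 * (X + C (a ^ 2)) ^ 3 * (X - C (a ^ 3)) := by
  rw [charpoly_blockR, charpoly_sol311_block2 a c hc, charpoly_sol311_block3 a c x4 hc hx4]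
  ring

/-- solution 3.1.1 has eigenvalues 1, −a², a³ with multiplicities 5, 3, 1. -/
theorem sol311_charpoly (a c x4 : ℂ) (ha0 : a ≠ 0) (ha1 : a ≠ 1) (ham1 : a ≠ -1)
    (hc : c ≠ 0) (hx4 : x4 ≠ 0) :
    (blockR 1 !![0, a ^ 2 / c; c, 1 - a ^ 2]
      !![0, 0, a ^ 4 / c ^ 2; 0, a, a * (a ^ 2 - 1) ^ 2 / x4; c ^ 2, x4, (a + 1) * (a - 1) ^ 2]
      !![0, a ^ 2 / c; c, 1 - a ^ 2] 1).charpoly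
      = (X - C 1) ^ 5 * (X + C (a ^ 2)) ^ 3 * (X - C (a ^ 3)) :=
  sol311_charpoly_general a c x4 hc hx4
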